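/- Core of Proposition 1 (MWU yields an ε-feasible point close to the bias vector): let A ∈ ℝ^{m×n}, b ∈ ℝ^m, b̄ ∈ ℝ^n, Δ ≥ 0, ρ > 0, and 0 < ε ≤ ρ, with n ≥ 1 and m + 2n + 1 ≥ 2. Consider the augmented linear feasibility system L2 in nonnegative variables (x, y) ∈ ℝ^n × ℝ^n with the m + 2n + 1 constraints: A_j x ≥ b_j for j ∈ {1,…,m}; y_i − x_i ≥ −b̄_i and y_i + x_i ≥ b̄_i for i ∈ {1,…,n}; and −Σ_{i=1}^{n} y_i ≥ −Δ·n. Set η = ε/(2ρ), and let (x^(t), y^(t)) for t = 0,…,T−1 be nonnegative vectors such that each constraint of L2 evaluated at (x^(t), y^(t)) has residual (left-hand side minus right-hand side) in [−ρ, ρ], and such that the MWU oracle condition holds at every step: the p^(t)-weighted sum of the residuals of L2 at (x^(t), y^(t)) is nonnegative, where p^(t) are the MWU probabilities for the costs given by the residuals divided by ρ. If T ≥ 4·ρ²·ln(m + 2n + 1)/ε², then the averaged point (x̂, ŷ) = (1/T) Σ_{t=0}^{T−1} (x^(t), y^(t)) satisfies: x̂ ≥ 0, A_j x̂ ≥ b_j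 − ε for every j ∈ {1,…,m} (i.e., x̂ is ε-feasible for the original system), and ‖x̂ − b̄‖₁ ≤ (Δ + ε)·n + ε. -/
import Mathlib


open Finset

/-- Multiplicative Weights Update weights over an arbitrary index type:
`w^(0)_k = 1`, `w^(t+1)_k = w^(t)_k * (1 - η * c^(t)_k)`. -/
noncomputable def mwuW {ι : Type} (η : ℝ) (c : ℕ → ι → ℝ) : ℕ → ι → ℝ
  | 0 => fun _ => 1
  | (t + 1) => fun k => mwuW η c t k * (1 - η * c t k)

/-- MWU probabilities `p^(t)_k = w^(t)_k / Σ_l w^(t)_l`. -/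
noncomputable def mwuP {ι : Type} [Fintype ι] (η : ℝ) (c : ℕ → ι → ℝ)
    (t : ℕ) (k : ι) : ℝ :=
  mwuW η c t k / ∑ l, mwuW η c t l

/-- Residuals (left-hand side minus right-hand side) of the augmented linear
feasibility system L2 in nonnegative variables `(x, y)`, with constraints
`A_j x ≥ b_j` (for `j ∈ Fin m`), `y_i − x_i ≥ −b̄_i` and `y_i + x_i ≥ b̄_i`
(for `i ∈ Fin n`), and `−Σ_i y_i ≥ −Δ·n`. -/
noncomputable def l2Resid (m n : ℕ) (A : Matrix (Fin m) (Fin n) ℝ)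
    (b : Fin m → ℝ) (bbar : Fin n → ℝ) (Δ : ℝ) (x y : Fin n → ℝ) :
    (Fin m ⊕ Fin n ⊕ Fin n ⊕ Unit) → ℝ
  | Sum.inl j => A.mulVec x j - b j
  | Sum.inr (Sum.inl i) => (y i - x i) - (-(bbar i))
  | Sum.inr (Sum.inr (Sum.inl i)) => (y i + x i) - bbar i
  | Sum.inr (Sum.inr (Sum.inr _)) => (-(∑ i, y i)) - (-(Δ * n))

lemma key_ineq (z : ℝ) (h1 : -(1/2) ≤ z) (h2 : z ≤ 1/2) : Real.exp (-z - z^2) ≤ 1 - z := by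
  set u : ℝ := -z - z^2 with hu
  have hu1 : |u| ≤ 1 := by rw [abs_le]; constructor <;> nlinarith
  have hb := Real.exp_bound hu1 (n := 4) (by norm_num)
  have hsum : (∑ i ∈ range 4, u ^ i / (i.factorial : ℝ)) = 1 + u + u^2/2 + u^3/6 := by
    norm_num [Finset.sum_range_succ, Nat.factorial]
  have habs : |u| ^ 4 = u ^ 4 := by rw [← abs_pow, abs_of_nonneg (by positivity)]
  rw [hsum, habs] at hb
  have hle : Real.exp u ≤ 1 + u + u^2/2 + u^3/6 + u^4 * (5/96) := by
    have h5 : ((Nat.succ 4 : ℕ) : ℝ) / ((Nat.factorial 4 : ℕ) * (4:ℕ)) = 5/96 := by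
      norm_num [Nat.factorial]
    have := (abs_sub_le_iff.1 hb).1
    rw [h5] at this
    linarith
  have hg : (1+z)^2/2 - z*(1+z)^3/6 + 5*z^2*(1+z)^4/96 ≤ 1 := by
    nlinarith [mul_nonneg (sub_nonneg.2 h2) (by linarith : (0:ℝ) ≤ z + 1/2), sq_nonneg (z-1/2), sq_nonneg (z+1/2), sq_nonneg z, mul_nonneg (mul_nonneg (sub_nonneg.2 h2) (by linarith : (0:ℝ) ≤ z + 1/2)) (sq_nonneg z), mul_nonneg (mul_nonneg (sub_nonneg.2 h2) (by linarith : (0:ℝ) ≤ z + 1/2)) (sq_nonneg (1+z)), sq_nonneg (z*(1+z))]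
  have hmul := mul_le_mul_of_nonneg_left hg (sq_nonneg z)
  have hfin : 1 + u + u^2/2 + u^3/6 + u^4 * (5/96) ≤ 1 - z := by
    rw [hu]; nlinarith [hmul]
  linarith

lemma mwu_regret {ι : Type} [Fintype ι] [Nonempty ι] {η : ℝ} (hη0 : 0 < η) (hη1 : η ≤ 1/2)
    (c : ℕ → ι → ℝ) (T : ℕ)
    (hb : ∀ t < T, ∀ k, |c t k| ≤ 1)
    (hor : ∀ t < T, 0 ≤ ∑ l, mwuP η c t l * c t l) (k : ι) :
    -(Real.log (Fintype.card ι)) - η^2 * T ≤ η * ∑ t ∈ range T, c t k := by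
  have hfac : ∀ t < T, ∀ k, (0:ℝ) < 1 - η * c t k := by
    intro t ht k
    have h := hb t ht k
    rw [abs_le] at h
    nlinarith
  have hwpos : ∀ t, t ≤ T → ∀ k, 0 < mwuW η c t k := by
    intro t
    induction t with
    | zero => intro _ k; simp [mwuW]
    | succ s ih =>
      intro hs k
      have hs' : s < T := Nat.lt_of_succ_le hs
      exact mul_pos (ih hs'.le k) (hfac s hs' k)
  have hΓpos : ∀ t, t ≤ T → 0 < ∑ l, mwuW η c t l :=
    fun t ht => Finset.sum_pos (fun l _ => hwpos t ht l) univ_nonempty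
  have hΓstep : ∀ t < T, ∑ l, mwuW η c (t+1) l ≤ ∑ l, mwuW η c t l := by
    intro t ht
    have hΓ := hΓpos t ht.le
    have hwc : 0 ≤ ∑ l, mwuW η c t l * c t l := by
      have h0 := hor t ht
      have heq : ∑ l, mwuP η c t l * c t l
          = (∑ l, mwuW η c t l * c t l) / (∑ l, mwuW η c t l) := by
        rw [Finset.sum_div]
        apply Finset.sum_congr rfl
        intro l _
        rw [mwuP]
        ring
      rw [heq] at h0
      have := (le_div_iff₀ hΓ).mp h0
      linarith
    calc ∑ l, mwuW η c (t+1) l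
        = ∑ l, (mwuW η c t l - η * (mwuW η c t l * c t l)) := by
          apply Finset.sum_congr rfl
          intro l _
          simp only [mwuW]
          ring
      _ = (∑ l, mwuW η c t l) - η * ∑ l, mwuW η c t l * c t l := by
          rw [Finset.sum_sub_distrib, Finset.mul_sum]
      _ ≤ ∑ l, mwuW η c t l := by nlinarith [mul_nonneg hη0.le hwc]
  have hΓT : ∀ t, t ≤ T → ∑ l, mwuW η c t l ≤ (Fintype.card ι : ℝ) := by
    intro t
    induction t with
    | zero => intro _; simp [mwuW, Finset.card_univ]
    | succ s ih =>
      intro hs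
      have hs' : s < T := Nat.lt_of_succ_le hs
      exact le_trans (hΓstep s hs') (ih hs'.le)
  have hlow : ∀ t, t ≤ T →
      Real.exp (∑ s ∈ range t, (-(η * c s k) - (η * c s k)^2)) ≤ mwuW η c t k := by
    intro t
    induction t with
    | zero => intro _; simp [mwuW]
    | succ s ih =>
      intro hs
      have hs' : s < T := Nat.lt_of_succ_le hs
      rw [Finset.sum_range_succ, Real.exp_add]
      have h1 := ih hs'.le
      have hck := hb s hs' k
      rw [abs_le] at hck
      have h2 : Real.exp (-(η * c s k) - (η * c s k)^2) ≤ 1 - η * c s k := by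
        apply key_ineq <;> nlinarith [hck.1, hck.2]
      calc Real.exp (∑ r ∈ range s, (-(η * c r k) - (η * c r k)^2))
            * Real.exp (-(η * c s k) - (η * c s k)^2)
          ≤ mwuW η c s k * (1 - η * c s k) :=
            mul_le_mul h1 h2 (Real.exp_pos _).le (hwpos s hs'.le k).le
        _ = mwuW η c (s+1) k := rfl
  have hsumsq : ∑ s ∈ range T, (η * c s k)^2 ≤ η^2 * T := by
    calc ∑ s ∈ range T, (η * c s k)^2 ≤ ∑ _s ∈ range T, η^2 := by
          apply Finset.sum_le_sum
          intro s hs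
          have h := hb s (mem_range.mp hs) k
          rw [abs_le] at h
          have hc2 : (c s k)^2 ≤ 1 := by nlinarith [h.1, h.2]
          nlinarith [mul_le_mul_of_nonneg_left hc2 (sq_nonneg η)]
      _ = η^2 * T := by simp [mul_comm]
  have hexp : -(η * ∑ t ∈ range T, c t k) - η^2 * T
      ≤ ∑ s ∈ range T, (-(η * c s k) - (η * c s k)^2) := by
    have heq : ∑ s ∈ range T, (-(η * c s k) - (η * c s k)^2)
        = -(η * ∑ t ∈ range T, c t k) - ∑ s ∈ range T, (η * c s k)^2 := by
      rw [Finset.sum_sub_distrib, Finset.mul_sum, ← Finset.sum_neg_distrib]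
    rw [heq]
    linarith
  have hup : mwuW η c T k ≤ (Fintype.card ι : ℝ) :=
    le_trans (Finset.single_le_sum (fun l _ => (hwpos T le_rfl l).le) (mem_univ k)) (hΓT T le_rfl)
  have hfinal : Real.exp (-(η * ∑ t ∈ range T, c t k) - η^2 * T) ≤ (Fintype.card ι : ℝ) :=
    le_trans (le_trans (Real.exp_le_exp.2 hexp) (hlow T le_rfl)) hup
  have hcard0 : (0:ℝ) < (Fintype.card ι : ℝ) := by
    exact_mod_cast Fintype.card_pos
  have := (Real.le_log_iff_exp_le hcard0).2 hfinal
  linarith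

/-- Core of Proposition 1: running MWU on the augmented system L2 with
`η = ε/(2ρ)` and `T ≥ 4ρ²·ln(m + 2n + 1)/ε²`, under the oracle condition,
yields an averaged point `x̂` that is ε-feasible for the original system and
satisfies `‖x̂ − b̄‖₁ ≤ (Δ + ε)·n + ε`. -/
theorem prop1_core (m n : ℕ) (hn : 1 ≤ n) (hcard : 2 ≤ m + 2 * n + 1)
    (A : Matrix (Fin m) (Fin n) ℝ) (b : Fin m → ℝ) (bbar : Fin n → ℝ)
    (Δ ρ ε : ℝ) (hΔ : 0 ≤ Δ) (hρ : 0 < ρ) (hε0 : 0 < ε) (hε : ε ≤ ρ)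
    (η : ℝ) (hη : η = ε / (2 * ρ))
    (T : ℕ)
    (hT : 4 * ρ ^ 2 * Real.log (m + 2 * n + 1 : ℕ) / ε ^ 2 ≤ (T : ℝ))
    (x y : ℕ → Fin n → ℝ)
    (hx : ∀ t < T, ∀ i, 0 ≤ x t i) (hy : ∀ t < T, ∀ i, 0 ≤ y t i)
    (c : ℕ → (Fin m ⊕ Fin n ⊕ Fin n ⊕ Unit) → ℝ)
    (hc : ∀ t k, c t k = l2Resid m n A b bbar Δ (x t) (y t) k / ρ)
    (hres : ∀ t < T, ∀ k, -ρ ≤ l2Resid m n A b bbar Δ (x t) (y t) k ∧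
      l2Resid m n A b bbar Δ (x t) (y t) k ≤ ρ)
    (horacle : ∀ t < T,
      0 ≤ ∑ k, mwuP η c t k * l2Resid m n A b bbar Δ (x t) (y t) k)
    (xhat yhat : Fin n → ℝ)
    (hxhat : xhat = fun i => (1 / (T : ℝ)) * ∑ t ∈ Finset.range T, x t i)
    (hyhat : yhat = fun i => (1 / (T : ℝ)) * ∑ t ∈ Finset.range T, y t i) :
    (∀ i, 0 ≤ xhat i) ∧
    (∀ j, A.mulVec xhat j ≥ b j - ε) ∧
    ∑ i, |xhat i - bbar i| ≤ (Δ + ε) * n + ε := by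
  have hcardι : Fintype.card (Fin m ⊕ Fin n ⊕ Fin n ⊕ Unit) = m + 2 * n + 1 := by
    simp [Fintype.card_sum]
    omega
  have hlogpos : 0 < Real.log ((m + 2 * n + 1 : ℕ) : ℝ) := by
    apply Real.log_pos
    exact_mod_cast hcard
  have hTpos : 0 < T := by
    rcases Nat.eq_zero_or_pos T with h0 | h
    · exfalso
      rw [h0] at hT
      have : 0 < 4 * ρ ^ 2 * Real.log ((m + 2 * n + 1 : ℕ) : ℝ) / ε ^ 2 := by positivity
      simp only [Nat.cast_zero] at hT
      linarith
    · exact h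
  have hT0 : (0:ℝ) < T := by exact_mod_cast hTpos
  have hη0 : 0 < η := by rw [hη]; positivity
  have hη1 : η ≤ 1/2 := by
    rw [hη, div_le_iff₀ (by linarith : (0:ℝ) < 2 * ρ)]
    linarith
  have hb : ∀ t < T, ∀ k, |c t k| ≤ 1 := by
    intro t ht k
    obtain ⟨h1, h2⟩ := hres t ht k
    rw [hc, abs_le]
    constructor
    · rw [le_div_iff₀ hρ]; linarith
    · rw [div_le_iff₀ hρ]; linarith
  have hor : ∀ t < T, 0 ≤ ∑ l, mwuP η c t l * c t l := by
    intro t ht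
    have h0 := horacle t ht
    have heq : ∑ l, mwuP η c t l * l2Resid m n A b bbar Δ (x t) (y t) l
        = ρ * ∑ l, mwuP η c t l * c t l := by
      rw [Finset.mul_sum]
      apply Finset.sum_congr rfl
      intro l _
      rw [hc]
      field_simp
    rw [heq] at h0
    exact nonneg_of_mul_nonneg_right h0 hρ
  have hkey : ∀ k, -(ε * T) ≤ ∑ t ∈ range T, l2Resid m n A b bbar Δ (x t) (y t) k := by
    intro k
    have hr := mwu_regret hη0 hη1 c T hb hor k
    rw [hcardι] at hr
    set L := Real.log ((m + 2 * n + 1 : ℕ) : ℝ) with hL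
    set S := ∑ t ∈ range T, c t k with hS
    have hressum : ∑ t ∈ range T, l2Resid m n A b bbar Δ (x t) (y t) k = ρ * S := by
      rw [hS, Finset.mul_sum]
      apply Finset.sum_congr rfl
      intro t _
      rw [hc]
      field_simp
    rw [hressum]
    -- hr : -L - η^2 * T ≤ η * S
    have h4 : 4 * ρ ^ 2 * L ≤ ε ^ 2 * T := by
      rw [div_le_iff₀ (by positivity : (0:ℝ) < ε ^ 2)] at hT
      linarith
    have hmul := mul_le_mul_of_nonneg_left hr (by positivity : (0:ℝ) ≤ 4 * ρ ^ 2)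
    have e1 : 4 * ρ ^ 2 * (η * S) = 2 * ρ * ε * S := by rw [hη]; field_simp; ring
    have e2 : 4 * ρ ^ 2 * (-L - η ^ 2 * T) = -(4 * ρ ^ 2 * L) - ε ^ 2 * T := by
      rw [hη]; field_simp; ring
    rw [e1, e2] at hmul
    nlinarith [hmul, h4, hε0, hT0]
  have hscale : ∀ a : ℝ, -(ε * T) ≤ a → -ε ≤ (1 / (T:ℝ)) * a := by
    intro a ha
    calc -ε = (1 / (T:ℝ)) * (-(ε * T)) := by field_simp
      _ ≤ (1 / (T:ℝ)) * a := mul_le_mul_of_nonneg_left ha (by positivity)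
  have hxnn : ∀ i, 0 ≤ xhat i := by
    intro i
    rw [hxhat]
    exact mul_nonneg (by positivity)
      (Finset.sum_nonneg fun t ht => hx t (mem_range.mp ht) i)
  refine ⟨hxnn, ?_, ?_⟩
  · -- feasibility
    intro j
    have hk := hkey (Sum.inl j)
    simp only [l2Resid] at hk
    rw [Finset.sum_sub_distrib, Finset.sum_const, card_range, nsmul_eq_mul] at hk
    have hmulvec : A.mulVec xhat j = (1 / (T:ℝ)) * ∑ t ∈ range T, A.mulVec (x t) j := by
      simp only [hxhat, Matrix.mulVec, dotProduct, Finset.mul_sum]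
      rw [Finset.sum_comm]
      apply Finset.sum_congr rfl
      intro i _
      apply Finset.sum_congr rfl
      intro t _
      ring
    rw [ge_iff_le, hmulvec]
    have h2 : -(ε * T) + T * b j ≤ ∑ t ∈ range T, A.mulVec (x t) j := by linarith
    calc b j - ε = (1 / (T:ℝ)) * (-(ε * T) + T * b j) := by field_simp; ring
      _ ≤ (1 / (T:ℝ)) * ∑ t ∈ range T, A.mulVec (x t) j :=
          mul_le_mul_of_nonneg_left h2 (by positivity)
  · -- l1 bound
    have hi1 : ∀ i, -ε ≤ yhat i - xhat i + bbar i := by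
      intro i
      have hk := hkey (Sum.inr (Sum.inl i))
      simp only [l2Resid] at hk
      have heq : ∑ t ∈ range T, (y t i - x t i - -(bbar i))
          = (∑ t ∈ range T, y t i) - (∑ t ∈ range T, x t i) + T * bbar i := by
        simp only [sub_neg_eq_add]
        rw [Finset.sum_add_distrib, Finset.sum_sub_distrib, Finset.sum_const, card_range,
          nsmul_eq_mul]
      rw [heq] at hk
      have hval : yhat i - xhat i + bbar i
          = (1 / (T:ℝ)) * ((∑ t ∈ range T, y t i) - (∑ t ∈ range T, x t i) + T * bbar i) := by
        simp only [hxhat, hyhat]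
        field_simp
        try ring
      rw [hval]
      exact hscale _ hk
    have hi2 : ∀ i, -ε ≤ yhat i + xhat i - bbar i := by
      intro i
      have hk := hkey (Sum.inr (Sum.inr (Sum.inl i)))
      simp only [l2Resid] at hk
      have heq : ∑ t ∈ range T, (y t i + x t i - bbar i)
          = (∑ t ∈ range T, y t i) + (∑ t ∈ range T, x t i) - T * bbar i := by
        rw [Finset.sum_sub_distrib, Finset.sum_add_distrib, Finset.sum_const, card_range,
          nsmul_eq_mul]
      rw [heq] at hk
      have hval : yhat i + xhat i - bbar i
          = (1 / (T:ℝ)) * ((∑ t ∈ range T, y t i) + (∑ t ∈ range T, x t i) - T * bbar i) := by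
        simp only [hxhat, hyhat]
        field_simp
        try ring
      rw [hval]
      exact hscale _ hk
    have hi3 : ∑ i, yhat i ≤ Δ * n + ε := by
      have hk := hkey (Sum.inr (Sum.inr (Sum.inr Unit.unit)))
      simp only [l2Resid] at hk
      have heq : ∑ t ∈ range T, (-(∑ i, y t i) - -(Δ * n))
          = -(∑ t ∈ range T, ∑ i, y t i) + T * (Δ * n) := by
        simp only [sub_neg_eq_add]
        rw [Finset.sum_add_distrib, Finset.sum_neg_distrib, Finset.sum_const, card_range,
          nsmul_eq_mul]
      rw [heq] at hk
      have hval : ∑ i, yhat i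
          = (1 / (T:ℝ)) * ∑ t ∈ range T, ∑ i, y t i := by
        simp only [hyhat]
        rw [← Finset.mul_sum, Finset.sum_comm]
      have hsc := hscale _ hk
      rw [mul_add] at hsc
      have e3 : (1 / (T:ℝ)) * ((T:ℝ) * (Δ * n)) = Δ * n := by field_simp
      rw [e3, mul_neg, ← hval] at hsc
      linarith
    have habs : ∀ i, |xhat i - bbar i| ≤ yhat i + ε := by
      intro i
      rw [abs_le]
      constructor
      · have := hi2 i; linarith
      · have := hi1 i; linarith
    calc ∑ i, |xhat i - bbar i| ≤ ∑ i, (yhat i + ε) := Finset.sum_le_sum fun i _ => habs i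
      _ = (∑ i, yhat i) + n * ε := by
          rw [Finset.sum_add_distrib, Finset.sum_const, Finset.card_univ, Fintype.card_fin,
            nsmul_eq_mul]
      _ ≤ (Δ + ε) * n + ε := by nlinarith [hi3]
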